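/- Assume 0 < ε ≤ 1/2 and C > 0, and set M = 1 + (4(2 + ε)/ε²)(C + log 8). Let R_1, …, R_d be independent random variables, each distributed according to the geometric distribution Geom(1/2) on the nonnegative integers, and define S_i = |{j ∈ {1,…,d} : R_j ≥ i}|. Let ℓ ≥ 2 be an integer such that M·2^{ℓ−1} ≤ d < M·2^{ℓ}. Then P(S_{ℓ−2} ≤ M) < (1/8)·e^{−C}. -/

import Mathlib

open MeasureTheory ProbabilityTheory

/-- `Scnt R i` is the number of indices `j` with `R j ≥ i` (an integer index
`i ≤ 0` is satisfied by every entry). -/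
def Scnt {d : ℕ} (R : Fin d → ℕ) (i : ℤ) : ℕ :=
  (Finset.univ.filter fun j : Fin d => i ≤ (R j : ℤ)).card

/-- `Tcnt R i` is the number of indices `j` other than the first one with
`R j ≥ i`. -/
def Tcnt {d : ℕ} (R : Fin d → ℕ) (i : ℤ) : ℕ :=
  (Finset.univ.filter fun j : Fin d => i ≤ (R j : ℤ) ∧ 0 < (j : ℕ)).card

/-!
`S_{ℓ-2}` is a sum of `d` independent indicators of events of probability `p = 2^{-(ℓ-2)}`,
with mean `p d ≥ 2M`. The Chernoff bound at `t = -log 2` gives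
`P(S_{ℓ-2} ≤ M) ≤ 2^M (1 - p/2)^d ≤ 2^M e^{-pd/2} ≤ e^{-(1 - log 2) M}`, and
`(1 - log 2) M > C + log 8` because the factor `4(2+ε)/ε²` in `M` exceeds `1/(1 - log 2)`.
-/

open Real Finset

section Probability

variable {Ω : Type*} {mΩ : MeasurableSpace Ω} {μ : Measure Ω}

lemma measure_le_of_forall_measure_eq_two_inv_pow [IsProbabilityMeasure μ] {X : Ω → ℕ}
    (hX : Measurable X) (hgeom : ∀ i : ℕ, μ {ω | X ω = i} = 2⁻¹ ^ (i + 1)) (k : ℕ) :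
    μ {ω | k ≤ X ω} = 2⁻¹ ^ k := by
  induction k with
  | zero => simp
  | succ k ih =>
    have hsplit : {ω | k ≤ X ω} = {ω | X ω = k} ∪ {ω | k + 1 ≤ X ω} := by
      ext ω; simp only [Set.mem_ofPred_eq, Set.mem_union]; omega
    have hdisj : Disjoint {ω | X ω = k} {ω | k + 1 ≤ X ω} :=
      Set.disjoint_left.2 fun ω h1 h2 => by simp_all
    have hunion := measure_union (μ := μ) hdisj (hX measurableSet_Ici)
    have halve : (2⁻¹ : ENNReal) ^ k = 2⁻¹ ^ (k + 1) + 2⁻¹ ^ (k + 1) := by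
      rw [← two_mul, pow_succ', ← mul_assoc,
        ENNReal.mul_inv_cancel two_ne_zero ENNReal.ofNat_ne_top, one_mul]
    rw [← hsplit, ih, hgeom, halve] at hunion
    exact ((ENNReal.add_right_inj (ENNReal.pow_ne_top (by simp))).1 hunion).symm

lemma ProbabilityTheory.iIndepFun.iIndepSet_preimage {ι β : Type*} {mβ : MeasurableSpace β}
    {R : ι → Ω → β} (hR : iIndepFun R μ) (hmeas : ∀ j, Measurable (R j)) {s : ι → Set β}
    (hs : ∀ j, MeasurableSet (s j)) : iIndepSet (fun j => R j ⁻¹' s j) μ := by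
  rw [iIndepSet_iff_meas_biInter fun j => hmeas j (hs j)]
  exact fun S => hR.measure_inter_preimage_eq_mul S fun j _ => hs j

lemma mgf_indicator_one [IsProbabilityMeasure μ] {A : Set Ω} (hA : MeasurableSet A) (t : ℝ) :
    mgf (A.indicator 1) μ t = 1 + (exp t - 1) * μ.real A := by
  have hexp : (fun ω => exp (t * A.indicator 1 ω)) =
      fun ω => A.indicator (fun _ => exp t - 1) ω + 1 := by
    ext ω; by_cases h : ω ∈ A <;> simp [h]
  rw [mgf, hexp, integral_add ((integrable_const _).indicator hA) (integrable_const 1),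
    integral_indicator_const _ hA]
  simp [mul_comm, add_comm]

variable [IsProbabilityMeasure μ] {ι : Type*} [Fintype ι] {A : ι → Set Ω}

lemma measureReal_sum_indicator_le_le_exp_mul_prod (hA : ∀ j, MeasurableSet (A j))
    (hind : iIndepSet A μ) (a : ℝ) {t : ℝ} (ht : t ≤ 0) :
    μ.real {ω | ∑ j, (A j).indicator 1 ω ≤ a} ≤
      exp (-t * a) * ∏ j, (1 + (exp t - 1) * μ.real (A j)) := by
  set X : ι → Ω → ℝ := fun j => (A j).indicator 1
  have hXindep : iIndepFun X μ := hind.iIndepFun_indicator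
  have hXmeas : ∀ j, Measurable (X j) := fun j => measurable_one.indicator (hA j)
  have hint : Integrable (fun ω => exp (t * (∑ j, X j) ω)) μ := by
    refine .of_bound (by fun_prop) 1 (ae_of_all _ fun ω => ?_)
    have hsum : 0 ≤ (∑ j, X j) ω := by
      rw [Finset.sum_apply]
      exact sum_nonneg fun j _ => Set.indicator_nonneg (fun _ _ => zero_le_one) ω
    rw [norm_of_nonneg (exp_pos _).le, exp_le_one_iff]
    exact mul_nonpos_of_nonpos_of_nonneg ht hsum
  have hchernoff := measure_le_le_exp_mul_mgf a ht hint
  rw [hXindep.mgf_sum hXmeas] at hchernoff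
  simpa [X, mgf_indicator_one (hA _)] using hchernoff

lemma measureReal_sum_indicator_le_le_exp (hA : ∀ j, MeasurableSet (A j))
    (hind : iIndepSet A μ) (a : ℝ) :
    μ.real {ω | ∑ j, (A j).indicator 1 ω ≤ a} ≤
      exp (a * log 2 - (∑ j, μ.real (A j)) / 2) := by
  have hfactor : ∀ j, 1 + (exp (-log 2) - 1) * μ.real (A j) ≤ exp (-(μ.real (A j) / 2)) := by
    intro j
    rw [exp_neg, exp_log two_pos]
    linarith [add_one_le_exp (-(μ.real (A j) / 2))]
  have hnonneg : ∀ j, 0 ≤ 1 + (exp (-log 2) - 1) * μ.real (A j) := by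
    intro j
    rw [exp_neg, exp_log two_pos]
    linarith [measureReal_le_one (μ := μ) (s := A j)]
  calc μ.real {ω | ∑ j, (A j).indicator 1 ω ≤ a}
      ≤ exp (-(-log 2) * a) * ∏ j, (1 + (exp (-log 2) - 1) * μ.real (A j)) :=
        measureReal_sum_indicator_le_le_exp_mul_prod hA hind a
          (neg_nonpos.2 (log_nonneg one_le_two))
    _ ≤ exp (-(-log 2) * a) * ∏ j, exp (-(μ.real (A j) / 2)) :=
        mul_le_mul_of_nonneg_left (prod_le_prod (fun j _ => hnonneg j) fun j _ => hfactor j)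
          (exp_pos _).le
    _ = exp (a * log 2 - (∑ j, μ.real (A j)) / 2) := by
        rw [← exp_sum, ← exp_add, sum_neg_distrib, ← sum_div]
        ring_nf

end Probability

lemma Scnt_natCast_eq_sum_indicator {Ω : Type*} {d : ℕ} (R : Fin d → Ω → ℕ) (k : ℕ)
    (ω : Ω) :
    (Scnt (fun j => R j ω) k : ℝ) = ∑ j, (R j ⁻¹' Set.Ici k).indicator 1 ω := by
  rw [Scnt, card_filter, Nat.cast_sum]
  refine sum_congr rfl fun j _ => ?_
  by_cases h : k ≤ R j ω <;> simp [h]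

lemma four_le_four_mul_two_add_div_sq {ε : ℝ} (hε : 0 < ε) (hε' : ε ≤ 2) :
    4 ≤ 4 * (2 + ε) / ε ^ 2 := by
  rw [le_div_iff₀ (by positivity)]
  nlinarith

lemma lt_one_sub_log_two_mul_one_add_mul {K x : ℝ} (hK : 4 ≤ K) (hpos : 0 < 1 + K * x) :
    x < (1 - log 2) * (1 + K * x) := by
  have hlog2 : log 2 < 3 / 4 := by linarith [log_two_lt_d9]
  -- `(1 - log 2)(1 + Kx) - x = (1 + Kx)(1 - log 2 - 1/K) + 1/K`, and `1 - log 2 > 1/4 ≥ 1/K`.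
  nlinarith [mul_pos hpos (by linarith : (0 : ℝ) < 1 - log 2 - 1 / 4)]

theorem Scount_low_tail_bound_general {Ω : Type*} [MeasureSpace Ω]
    [IsProbabilityMeasure (ℙ : Measure Ω)]
    (ε C : ℝ) (hε : 0 < ε) (hε' : ε ≤ 1 / 2)
    (M : ℝ) (hM : M = 1 + 4 * (2 + ε) / ε ^ 2 * (C + Real.log 8))
    (d : ℕ) (R : Fin d → Ω → ℕ)
    (hmeas : ∀ j, Measurable (R j))
    (hindep : iIndepFun R ℙ)
    (hgeom : ∀ j (i : ℕ), ℙ {ω | R j ω = i} = (2 : ENNReal)⁻¹ ^ (i + 1))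
    (ℓ : ℤ) (hℓ : 2 ≤ ℓ)
    (hℓ₁ : M * 2 ^ (ℓ - 1) ≤ (d : ℝ)) (hℓ₂ : (d : ℝ) < M * 2 ^ ℓ)  :
    ℙ {ω | (Scnt (fun j => R j ω) (ℓ - 2) : ℝ) ≤ M} <
      ENNReal.ofReal (1 / 8 * Real.exp (-C)) := by
  obtain ⟨k, rfl⟩ : ∃ k : ℕ, ℓ = k + 2 := ⟨(ℓ - 2).toNat, by omega⟩
  have hA : ∀ j, MeasurableSet (R j ⁻¹' Set.Ici k) := fun j => hmeas j measurableSet_Ici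
  have hprob : ∀ j, (ℙ : Measure Ω).real (R j ⁻¹' Set.Ici k) = (2 : ℝ)⁻¹ ^ k := by
    intro j
    simp [measureReal_def, Set.preimage,
      measure_le_of_forall_measure_eq_two_inv_pow (hmeas j) (hgeom j)]
  have hMpos : 0 < M := pos_of_mul_pos_left ((Nat.cast_nonneg d).trans_lt hℓ₂) (by positivity)
  have hmean : 2 * M ≤ (2 : ℝ)⁻¹ ^ k * d := by
    rw [show (k : ℤ) + 2 - 1 = ((k + 1 : ℕ) : ℤ) by omega, zpow_natCast] at hℓ₁
    calc 2 * M = 2⁻¹ ^ k * (M * 2 ^ (k + 1)) := by rw [pow_succ, inv_pow]; field_simp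
      _ ≤ 2⁻¹ ^ k * d := by gcongr
  have hK := four_le_four_mul_two_add_div_sq hε (by linarith)
  rw [← ofReal_measureReal, ENNReal.ofReal_lt_ofReal_iff (by positivity), add_sub_cancel_right]
  simp_rw [Scnt_natCast_eq_sum_indicator]
  calc (ℙ : Measure Ω).real {ω | ∑ j, (R j ⁻¹' Set.Ici k).indicator 1 ω ≤ M}
      ≤ exp (M * log 2 - (∑ j, (ℙ : Measure Ω).real (R j ⁻¹' Set.Ici k)) / 2) :=
        measureReal_sum_indicator_le_le_exp hA
          (hindep.iIndepSet_preimage hmeas fun _ => measurableSet_Ici) M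
    _ ≤ exp (-((1 - log 2) * M)) := by
        gcongr
        simp only [hprob, sum_const, card_univ, Fintype.card_fin, nsmul_eq_mul]
        linarith
    _ < exp (-(C + log 8)) := by
        rw [hM] at hMpos ⊢
        gcongr
        exact lt_one_sub_log_two_mul_one_add_mul hK hMpos
    _ = 1 / 8 * exp (-C) := by
        rw [neg_add, exp_add, exp_neg (log 8), exp_log (by norm_num)]
        ring

theorem Scount_low_tail_bound {Ω : Type*} [MeasureSpace Ω]
    [IsProbabilityMeasure (ℙ : Measure Ω)]
    (ε C : ℝ) (hε : 0 < ε) (hε' : ε ≤ 1 / 2) (hC : 0 < C)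
    (M : ℝ) (hM : M = 1 + 4 * (2 + ε) / ε ^ 2 * (C + Real.log 8))
    (d : ℕ) (R : Fin d → Ω → ℕ)
    (hmeas : ∀ j, Measurable (R j))
    (hindep : iIndepFun R ℙ)
    (hgeom : ∀ j (i : ℕ), ℙ {ω | R j ω = i} = (2 : ENNReal)⁻¹ ^ (i + 1))
    (ℓ : ℤ) (hℓ : 2 ≤ ℓ)
    (hℓ₁ : M * 2 ^ (ℓ - 1) ≤ (d : ℝ)) (hℓ₂ : (d : ℝ) < M * 2 ^ ℓ)  :
    ℙ {ω | (Scnt (fun j => R j ω) (ℓ - 2) : ℝ) ≤ M} <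
      ENNReal.ofReal (1 / 8 * Real.exp (-C)) :=
  Scount_low_tail_bound_general ε C hε hε' M hM d R hmeas hindep hgeom ℓ hℓ hℓ₁ hℓ₂
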